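/- arXiv:1110.0620 — 8 statements merged into one kernel-verified Lean document; each statement's English description precedes it below -/
import Mathlib

section
/- In a weighted complete graph on n vertices (n ≥ 3) with symmetric weights satisfying the triangle inequality, the length of any Hamiltonian cycle is at most (n/2)·τ, where τ is the length of a shortest Hamiltonian cycle. -/
/-!
Any two vertices `u, v` of a Hamiltonian cycle split it into two paths from `u` to `v`, each of
length at least `d u v` by the triangle inequality. Hence every edge weighs at most half the
length of any Hamiltonian cycle, and a cycle with `n` edges has length at most `n / 2` times it.
-/

open Finset Fin.NatCast Fin.CommRing

theorem Fin.sum_univ_eq_sum_range_add {M : Type*} [AddCommMonoid M] {n : ℕ} [NeZero n]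
    (g : Fin n → M) (a : Fin n) : ∑ i, g i = ∑ j ∈ range n, g (a + j) := by
  rw [← Fin.sum_univ_eq_sum_range (fun j => g (a + j)), ← Equiv.sum_comp (Equiv.addLeft a)]
  simp only [Equiv.coe_addLeft, Fin.cast_val_eq_self]

theorem Fin.sum_univ_eq_sum_range_add_add_sum_range_add {M : Type*} [AddCommMonoid M] {n : ℕ}
    [NeZero n] (g : Fin n → M) (a : Fin n) {k : ℕ} (hk : k ≤ n) :
    ∑ i, g i = ∑ j ∈ range k, g (a + j) + ∑ j ∈ range (n - k), g (a + k + j) := by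
  have hrange : range n = range (k + (n - k)) := by rw [Nat.add_sub_cancel' hk]
  rw [Fin.sum_univ_eq_sum_range_add g a, hrange, sum_range_add]
  simp only [Nat.cast_add, add_assoc]

section

variable {V : Type*} (d : V → V → ℝ)

theorem le_sum_range_of_triangle (hdiag : ∀ v, d v v = 0)
    (htri : ∀ u v w, d u w ≤ d u v + d v w) (f : ℕ → V) (k : ℕ) :
    d (f 0) (f k) ≤ ∑ j ∈ range k, d (f j) (f (j + 1)) := by
  induction k with
  | zero => simp [hdiag]
  | succ k ih =>
    rw [sum_range_succ]
    linarith [htri (f 0) (f k) (f (k + 1))]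

def cycleLength {n : ℕ} [NeZero n] (c : Fin n → V) : ℝ :=
  ∑ i, d (c i) (c (i + 1))

theorem two_mul_le_cycleLength (hdiag : ∀ v, d v v = 0) (hsymm : ∀ u v, d u v = d v u)
    (htri : ∀ u v w, d u w ≤ d u v + d v w) {n : ℕ} [NeZero n] (c : Fin n → V) (a b : Fin n) :
    2 * d (c a) (c b) ≤ cycleLength d c := by
  have hpath (p : Fin n) (m : ℕ) :
      d (c p) (c (p + m)) ≤ ∑ j ∈ range m, d (c (p + j)) (c (p + j + 1)) := by
    simpa [add_assoc] using le_sum_range_of_triangle d hdiag htri (fun j => c (p + j)) m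
  set k := (b - a).val
  have hk : k ≤ n := (b - a).is_lt.le
  have hab : a + (k : Fin n) = b := by simp [k]
  have hba : b + ((n - k : ℕ) : Fin n) = a := by
    rw [Nat.cast_sub hk, Fin.natCast_self, ← hab]; ring
  have h₁ := hpath a k
  have h₂ := hpath b (n - k)
  rw [hab] at h₁
  rw [hba, hsymm] at h₂
  rw [cycleLength, Fin.sum_univ_eq_sum_range_add_add_sum_range_add _ a hk, hab]
  linarith

theorem cycleLength_le_half_mul_cycleLength (hdiag : ∀ v, d v v = 0)
    (hsymm : ∀ u v, d u v = d v u) (htri : ∀ u v w, d u w ≤ d u v + d v w)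
    {m n : ℕ} [NeZero m] [NeZero n] (c : Fin m → V) (c₀ : Fin n → V)
    (hc₀ : Function.Surjective c₀) :
    cycleLength d c ≤ (m / 2 : ℝ) * cycleLength d c₀ := by
  calc cycleLength d c ≤ ∑ _i : Fin m, cycleLength d c₀ / 2 := by
        refine sum_le_sum fun i _ => ?_
        obtain ⟨a, ha⟩ := hc₀ (c i)
        obtain ⟨b, hb⟩ := hc₀ (c (i + 1))
        have := two_mul_le_cycleLength d hdiag hsymm htri c₀ a b
        rw [ha, hb] at this
        linarith
    _ = (m / 2 : ℝ) * cycleLength d c₀ := by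
        rw [sum_const, card_univ, Fintype.card_fin, nsmul_eq_mul]; ring

end

theorem stmt_1_general {V : Type*} (n : ℕ) [NeZero n]
    (d : V → V → ℝ)
    (hdiag : ∀ v, d v v = 0)
    (hsymm : ∀ u v, d u v = d v u)
    (htri : ∀ u v w, d u w ≤ d u v + d v w)
    (τ : ℝ)
    (hτ : IsLeast {L : ℝ | ∃ c : Fin n ≃ V, L = ∑ i : Fin n, d (c i) (c (i + 1))} τ)
    (c : Fin n ≃ V) :
    ∑ i : Fin n, d (c i) (c (i + 1)) ≤ ((n : ℝ) / 2) * τ := by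
  obtain ⟨⟨c₀, rfl⟩, -⟩ := hτ
  exact cycleLength_le_half_mul_cycleLength d hdiag hsymm htri c c₀ c₀.surjective

theorem stmt_1 {V : Type*} [Fintype V] [DecidableEq V] (n : ℕ) [NeZero n] (hn : 3 ≤ n)
    (hcard : Fintype.card V = n) (d : V → V → ℝ)
    (hdiag : ∀ v, d v v = 0)
    (hsymm : ∀ u v, d u v = d v u)
    (hnonneg : ∀ u v, 0 ≤ d u v)
    (htri : ∀ u v w, d u w ≤ d u v + d v w)
    (τ : ℝ)
    (hτ : IsLeast {L : ℝ | ∃ c : Fin n ≃ V, L = ∑ i : Fin n, d (c i) (c (i + 1))} τ)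
    (c : Fin n ≃ V) :
    ∑ i : Fin n, d (c i) (c (i + 1)) ≤ ((n : ℝ) / 2) * τ :=
  stmt_1_general n d hdiag hsymm htri τ hτ c
end

section
/- In a weighted complete graph on n vertices (n even, n ≥ 4) with symmetric weights satisfying the triangle inequality, the sum of d(v,v') over all ordered pairs of distinct vertices v, v' is at most n²τ/4, where τ is the length of a shortest Hamiltonian cycle. -/
/-!
Fix a shortest tour `c` and let `S k = ∑ i, d (c i) (c (i + k))` be the total length of the chords
joining points `k` steps apart on it, so that `S 1 = τ`. The triangle inequality gives
`S (k + 1) ≤ S k + S 1`, hence `S k ≤ k τ`, and symmetry gives `S k = S (-k)`, hence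
`S k ≤ min k (n - k) τ`. Summing over `k`, and using `∑_{k < n} min k (n - k) = n² / 4` for even
`n`, gives `∑ d = ∑ S k ≤ (n² / 4) τ`.
-/

open Finset

theorem Nat.sum_range_min_sub (m : ℕ) : ∑ k ∈ range (m + m), min k (m + m - k) = m * m := by
  rw [sum_range_add]
  have hlow : ∀ k ∈ range m, min k (m + m - k) = k := by
    intro k hk; rw [mem_range] at hk; omega
  have hhigh : ∀ k ∈ range m, min (m + k) (m + m - (m + k)) = m - k := by
    intro k hk; rw [mem_range] at hk; omega
  rw [sum_congr rfl hlow, sum_congr rfl hhigh, ← sum_add_distrib,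
    sum_congr rfl fun k hk => Nat.add_sub_of_le (mem_range.1 hk).le, sum_const, card_range,
    smul_eq_mul]

section CycleChords

open Fin.NatCast Fin.CommRing

variable {V : Type*} {n : ℕ} [NeZero n] (d : V → V → ℝ) (c : Fin n → V)

def cycleChordSum (k : Fin n) : ℝ := ∑ i, d (c i) (c (i + k))

theorem cycleChordSum_zero (hdiag : ∀ v, d v v = 0) : cycleChordSum d c 0 = 0 := by
  simp [cycleChordSum, hdiag]

theorem cycleChordSum_add_one_le (htri : ∀ u v w, d u w ≤ d u v + d v w) (k : Fin n) :
    cycleChordSum d c (k + 1) ≤ cycleChordSum d c k + cycleChordSum d c 1 := by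
  have hrotate : ∑ i, d (c (i + k)) (c (i + k + 1)) = cycleChordSum d c 1 :=
    Fintype.sum_equiv (Equiv.addRight k) _ (fun j => d (c j) (c (j + 1))) fun _ => rfl
  calc cycleChordSum d c (k + 1)
      ≤ ∑ i, (d (c i) (c (i + k)) + d (c (i + k)) (c (i + k + 1))) :=
        sum_le_sum fun i _ => by rw [← add_assoc]; exact htri _ _ _
    _ = cycleChordSum d c k + cycleChordSum d c 1 := by rw [sum_add_distrib, hrotate]; rfl

theorem cycleChordSum_natCast_le (hdiag : ∀ v, d v v = 0)
    (htri : ∀ u v w, d u w ≤ d u v + d v w) (m : ℕ) :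
    cycleChordSum d c m ≤ m * cycleChordSum d c 1 := by
  induction m with
  | zero => simp [cycleChordSum_zero d c hdiag]
  | succ m ih =>
    push_cast
    linarith [cycleChordSum_add_one_le d c htri m]

theorem cycleChordSum_neg (hsymm : ∀ u v, d u v = d v u) (k : Fin n) :
    cycleChordSum d c (-k) = cycleChordSum d c k :=
  (Fintype.sum_equiv (Equiv.addRight k) _ _ fun i => by
    rw [Equiv.coe_addRight, add_neg_cancel_right, hsymm]).symm

theorem cycleChordSum_le_min_mul (hdiag : ∀ v, d v v = 0) (hsymm : ∀ u v, d u v = d v u)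
    (htri : ∀ u v w, d u w ≤ d u v + d v w) (k : Fin n) :
    cycleChordSum d c k ≤ (min k.val (n - k.val) : ℕ) * cycleChordSum d c 1 := by
  have hforward : cycleChordSum d c k ≤ k.val * cycleChordSum d c 1 := by
    simpa using cycleChordSum_natCast_le d c hdiag htri k.val
  have hcast : ((n - k.val : ℕ) : Fin n) = -k := by
    rw [Nat.cast_sub k.isLt.le, Fin.natCast_self, Fin.cast_val_eq_self, zero_sub]
  have hbackward : cycleChordSum d c k ≤ (n - k.val : ℕ) * cycleChordSum d c 1 := by
    simpa [hcast, cycleChordSum_neg d c hsymm] using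
      cycleChordSum_natCast_le d c hdiag htri (n - k.val)
  rcases min_choice k.val (n - k.val) with h | h <;> rw [h] <;> assumption

theorem sum_sum_eq_sum_cycleChordSum [Fintype V] (e : Fin n ≃ V) :
    ∑ v, ∑ v', d v v' = ∑ k, cycleChordSum d e k :=
  calc ∑ v, ∑ v', d v v' = ∑ i, ∑ k, d (e i) (e (i + k)) := by
        rw [← e.sum_comp]
        exact sum_congr rfl fun i _ => (((Equiv.addLeft i).trans e).sum_comp _).symm
    _ = ∑ k, cycleChordSum d e k := sum_comm

end CycleChords

theorem stmt_2_general {V : Type*} [Fintype V] [DecidableEq V] (n : ℕ) [NeZero n] (hev : Even n)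
    (d : V → V → ℝ)
    (hdiag : ∀ v, d v v = 0)
    (hsymm : ∀ u v, d u v = d v u)
    (htri : ∀ u v w, d u w ≤ d u v + d v w)
    (τ : ℝ)
    (hτ : IsLeast {L : ℝ | ∃ c : Fin n ≃ V, L = ∑ i : Fin n, d (c i) (c (i + 1))} τ) :
    ∑ v : V, ∑ v' ∈ Finset.univ.erase v, d v v' ≤ (n : ℝ) ^ 2 * τ / 4 := by
  obtain ⟨⟨c, rfl⟩, -⟩ := hτ
  obtain ⟨m, rfl⟩ := hev
  calc ∑ v, ∑ v' ∈ univ.erase v, d v v'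
      = ∑ k, cycleChordSum d c k := by
        rw [← sum_sum_eq_sum_cycleChordSum d c]
        exact sum_congr rfl fun v _ => sum_erase _ (hdiag v)
    _ ≤ ∑ k : Fin (m + m), (min k.val (m + m - k.val) : ℕ) * cycleChordSum d c 1 :=
        sum_le_sum fun k _ => cycleChordSum_le_min_mul d c hdiag hsymm htri k
    _ = (m * m : ℕ) * cycleChordSum d c 1 := by
        rw [← sum_mul, ← Nat.cast_sum, Fin.sum_univ_eq_sum_range (fun k => min k (m + m - k)),
          Nat.sum_range_min_sub]
    _ = ((m + m : ℕ) : ℝ) ^ 2 * cycleChordSum d c 1 / 4 := by push_cast; ring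

theorem stmt_2 {V : Type*} [Fintype V] [DecidableEq V] (n : ℕ) [NeZero n] (hn : 4 ≤ n) (hev : Even n)
    (hcard : Fintype.card V = n) (d : V → V → ℝ)
    (hdiag : ∀ v, d v v = 0)
    (hsymm : ∀ u v, d u v = d v u)
    (hnonneg : ∀ u v, 0 ≤ d u v)
    (htri : ∀ u v w, d u w ≤ d u v + d v w)
    (τ : ℝ)
    (hτ : IsLeast {L : ℝ | ∃ c : Fin n ≃ V, L = ∑ i : Fin n, d (c i) (c (i + 1))} τ) :
    ∑ v : V, ∑ v' ∈ Finset.univ.erase v, d v v' ≤ (n : ℝ) ^ 2 * τ / 4 :=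
  stmt_2_general n hev d hdiag hsymm htri τ hτ
end

section
/- For even n ≥ 4 and the circle-method schedule K*, the home/away assignment defined by: team t ∈ {0,…,n/2−1} plays home in mirrored-slot positions 2t, 2t+1, …, n+2t−2 (indices in {0,…,2n−3}) and away otherwise; team t ∈ {n/2,…,n−2} plays away in positions 2t−n+2, …, 2t and home otherwise; team n−1 plays away in positions 0,…,n−2 and home otherwise — is consistent: whenever teams i and j meet in a slot of the mirrored double round-robin (K*|K*), exactly one of them is assigned home and the other away. -/
/-- Circle-method single round-robin schedule: opponent of team `t` in slot `s`. -/
def Kstar (n t s : ℕ) : ℕ :=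
  if t = n - 1 then (if s % 2 = 0 then s / 2 else (s + n - 1) / 2)
  else
    let r := ((((s : ℤ) - (t : ℤ)) % ((n : ℤ) - 1)).toNat)
    if r = t then n - 1 else r

/-- Home/away assignment of the mirrored double round-robin `K*_DRR`:
`true` iff team `t` plays home in slot `s ∈ {0,…,2n-3}`. -/
def Home (n t s : ℕ) : Bool :=
  if t < n / 2 then decide (2 * t ≤ s ∧ s ≤ n + 2 * t - 2)
  else if t ≤ n - 2 then !(decide (2 * t - n + 2 ≤ s ∧ s ≤ 2 * t))
  else decide (n - 1 ≤ s)

/-!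
Write `m = n - 1` (odd) and `u < m` for a slot of the first leg; the slot `u + m` of the second
leg repeats its games with every team's venue flipped, so it suffices to treat the first leg.
There, team `n - 1` is always away, and its opponent `t` (the one with `2t ≡ u [MOD m]`) is home.
Every other game is `i` against `j` with `i + j ≡ u [MOD m]`. A team `t < n/2` is home exactly
from slot `2t` on, and a team `t ≥ n/2` exactly up to slot `2t - m`; hence if `i + j = u` the
smaller of the two teams is home, and if `i + j = u + m` the larger one.
-/

lemma Int.toNat_natCast_sub_emod_of_lt {a b m : ℕ} (ha : a < m) (hb : b < m) :
    (((a : ℤ) - b) % m).toNat = if b ≤ a then a - b else a + m - b := by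
  split_ifs with hba
  · rw [Int.emod_eq_of_lt (by omega) (by omega)]
    omega
  · have hshift : (a : ℤ) - b = (a + m - b) + (-1) * m := by ring
    rw [hshift, Int.add_mul_emod_self_right, Int.emod_eq_of_lt (by omega) (by omega)]
    omega

namespace Kstar

variable {n u : ℕ}

lemma last_spec (hev : Even n) (hu : u < n - 1) :
    Kstar n (n - 1) u < n - 1 ∧
      (2 * Kstar n (n - 1) u = u ∨ 2 * Kstar n (n - 1) u = u + (n - 1)) := by
  obtain ⟨k, rfl⟩ := hev
  unfold Kstar
  split_ifs <;> omega

lemma spec_of_lt {i : ℕ} (hi : i < n - 1) (hu : u < n - 1) :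
    (Kstar n i u = n - 1 ∧ (2 * i = u ∨ 2 * i = u + (n - 1))) ∨
      (Kstar n i u < n - 1 ∧ Kstar n i u ≠ i ∧
        (i + Kstar n i u = u ∨ i + Kstar n i u = u + (n - 1))) := by
  have hcast : ((n : ℤ) - 1) = ((n - 1 : ℕ) : ℤ) := by omega
  simp only [Kstar, if_neg hi.ne, hcast, Int.toNat_natCast_sub_emod_of_lt hu hi]
  split_ifs <;> omega

lemma lt {i : ℕ} (hev : Even n) (hi : i < n) (hu : u < n - 1) : Kstar n i u < n := by
  by_cases hlast : i = n - 1
  · subst hlast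
    have := (last_spec hev hu).1
    omega
  · rcases spec_of_lt (i := i) (by omega) hu with h | h <;> omega

end Kstar

namespace Home

variable {n t u : ℕ}

lemma add_sub_one_eq_not (hev : Even n) (ht : t < n) (hu : u < n - 1) :
    Home n t (u + (n - 1)) = !Home n t u := by
  obtain ⟨k, rfl⟩ := hev
  unfold Home
  split_ifs <;> simp only [← decide_not, decide_eq_decide] <;> omega

lemma last_eq_false (hu : u < n - 1) : Home n (n - 1) u = false := by
  unfold Home
  split_ifs <;> simp only [decide_eq_false_iff_not, Bool.not_eq_false', decide_eq_true_eq] <;>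
    omega

lemma eq_true_iff_of_lt (hev : Even n) (ht : t < n - 1) (hu : u < n - 1) :
    Home n t u = true ↔ (t < n / 2 ∧ 2 * t ≤ u) ∨ (n / 2 ≤ t ∧ u + (n - 1) ≤ 2 * t) := by
  obtain ⟨k, rfl⟩ := hev
  unfold Home
  split_ifs <;> simp only [Bool.not_eq_true', decide_eq_false_iff_not, decide_eq_true_eq] <;>
    omega

lemma eq_true_of_two_mul (hev : Even n) (ht : t < n - 1) (hu : u < n - 1)
    (h : 2 * t = u ∨ 2 * t = u + (n - 1)) : Home n t u = true := by
  rw [eq_true_iff_of_lt hev ht hu]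
  omega

lemma ne_of_add {i j : ℕ} (hev : Even n) (hi : i < n - 1) (hj : j < n - 1) (hu : u < n - 1)
    (hij : i ≠ j) (h : i + j = u ∨ i + j = u + (n - 1)) : Home n i u ≠ Home n j u := by
  rw [Ne, Bool.eq_iff_iff, eq_true_iff_of_lt hev hi hu, eq_true_iff_of_lt hev hj hu]
  obtain ⟨k, rfl⟩ := hev
  omega

lemma ne_Kstar_of_lt {i : ℕ} (hev : Even n) (hi : i < n) (hu : u < n - 1) :
    Home n i u ≠ Home n (Kstar n i u) u := by
  by_cases hlast : i = n - 1
  · subst hlast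
    obtain ⟨hlt, hmeet⟩ := Kstar.last_spec hev hu
    rw [last_eq_false hu, eq_true_of_two_mul hev hlt hu hmeet]
    decide
  · rcases Kstar.spec_of_lt (i := i) (by omega) hu with ⟨hK, hmeet⟩ | ⟨hlt, hne, hmeet⟩
    · rw [hK, last_eq_false hu, eq_true_of_two_mul hev (by omega) hu hmeet]
      decide
    · exact ne_of_add hev (by omega) hlt hu hne.symm hmeet

end Home

theorem stmt_5_general (n : ℕ) (hev : Even n) :
    ∀ s < 2 * n - 2, ∀ i < n,
      Home n i s ≠ Home n (Kstar n i (s % (n - 1))) s := by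
  intro s hs i hi
  by_cases hfirst : s < n - 1
  · rw [Nat.mod_eq_of_lt hfirst]
    exact Home.ne_Kstar_of_lt hev hi hfirst
  · obtain ⟨u, rfl⟩ : ∃ u, s = u + (n - 1) := ⟨s - (n - 1), by omega⟩
    have hu : u < n - 1 := by omega
    rw [Nat.add_mod_right, Nat.mod_eq_of_lt hu, Home.add_sub_one_eq_not hev hi hu,
      Home.add_sub_one_eq_not hev (Kstar.lt hev hi hu) hu, Ne, Bool.not_inj_iff]
    exact Home.ne_Kstar_of_lt hev hi hu

theorem stmt_5 (n : ℕ) (hn : 4 ≤ n) (hev : Even n) :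
    ∀ s < 2 * n - 2, ∀ i < n,
      Home n i s ≠ Home n (Kstar n i (s % (n - 1))) s :=
  stmt_5_general n hev
end

section
/- Let (u_0,…,u_{n-1}) be a shortest Hamiltonian cycle of length τ in a weighted complete graph on n vertices (n even, n ≥ 4) with symmetric nonnegative weights. For vertices u_i, u_j define h(u_i,u_j) as the length along the cycle from u_i to u_j in the forward direction if (j−i) mod n ≤ n/2 and in the backward direction otherwise. Then the sum over all ordered pairs of distinct vertices of h(u_i, u_j) equals n²τ/4. -/
/-!
Put `j = i + k`. For a fixed offset `k ≠ 0` the arcs from `u_i` to `u_{i+k}`, summed over all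
starting points `i`, cover every edge of the cycle exactly `min (k, n - k)` times, in one direction
or the other (symmetry of `d` identifies the two). Hence the total is `τ · ∑_{0 < k < n} min (k, n - k)`,
and for `n = 2p` this sum of cyclic distances is `p²`.
-/

open Finset

theorem Nat.sum_range_add_self_ite_le (m : ℕ) :
    ∑ k ∈ range (m + m), (if k ≤ m then k else m + m - k) = m * m := by
  rw [sum_range_add]
  have hlow : ∑ k ∈ range m, (if k ≤ m then k else m + m - k) = ∑ k ∈ range m, k :=
    sum_congr rfl fun k hk => if_pos (mem_range.1 hk).le
  have hhigh : ∑ k ∈ range m, (if m + k ≤ m then m + k else m + m - (m + k))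
      = ∑ k ∈ range m, (k + 1) := by
    rw [← sum_range_reflect]
    refine sum_congr rfl fun k hk => ?_
    have := mem_range.1 hk
    split_ifs <;> omega
  have gauss := sum_range_id_mul_two m
  rw [hlow, hhigh, sum_add_distrib, sum_const, card_range, smul_eq_mul, mul_one]
  rcases m with _ | m
  · rfl
  · rw [Nat.add_sub_cancel] at gauss
    linarith

theorem Finset.sum_univ_erase_eq_sum_add_left {G M : Type*} [AddGroup G] [Fintype G]
    [DecidableEq G] [AddCommMonoid M] (f : G → M) (i : G) :
    ∑ j ∈ univ.erase i, f j = ∑ k ∈ univ.erase 0, f (i + k) := by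
  have hshift : univ.erase i = (univ.erase 0).map (Equiv.addLeft i).toEmbedding := by
    simp [map_erase]
  rw [hshift, sum_map]
  rfl

section Cycle

open Fin.NatCast

variable {n : ℕ} [NeZero n] {M : Type*} [AddCommMonoid M]

theorem sum_sum_forward_arc (d : Fin n → Fin n → M) (l : ℕ) :
    ∑ i : Fin n, ∑ m ∈ range l, d (i + m) (i + m + 1) = l • ∑ i : Fin n, d i (i + 1) := by
  have shift (m : Fin n) : ∑ i : Fin n, d (i + m) (i + m + 1) = ∑ i : Fin n, d i (i + 1) :=
    Equiv.sum_comp (Equiv.addRight m) fun i => d i (i + 1)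
  rw [sum_comm]
  simp only [shift, sum_const, card_range]

theorem sum_sum_backward_arc {d : Fin n → Fin n → M} (hd : ∀ u v, d u v = d v u) (l : ℕ) :
    ∑ i : Fin n, ∑ m ∈ range l, d (i - m) (i - m - 1) = l • ∑ i : Fin n, d i (i + 1) := by
  have shift (m : Fin n) : ∑ i : Fin n, d (i - m) (i - m - 1) = ∑ i : Fin n, d i (i + 1) := by
    rw [← Equiv.sum_comp (Equiv.subRight (m + 1)) fun i => d i (i + 1)]
    refine sum_congr rfl fun i _ => ?_
    rw [Equiv.subRight_apply, sub_add_eq_sub_sub, sub_add_cancel, hd]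
  rw [sum_comm]
  simp only [shift, sum_const, card_range]

theorem sum_cycle_arc_of_offset {d : Fin n → Fin n → M} (hd : ∀ u v, d u v = d v u)
    {k : Fin n} (hk : k ≠ 0) :
    ∑ i : Fin n, (if k.val ≤ n / 2
        then ∑ m ∈ range k.val, d (i + m) (i + m + 1)
        else ∑ m ∈ range (-k).val, d (i - m) (i - m - 1))
      = (if k.val ≤ n / 2 then k.val else n - k.val) • ∑ i : Fin n, d i (i + 1) := by
  split_ifs
  · exact sum_sum_forward_arc d k.val
  · rw [sum_sum_backward_arc hd, Fin.val_neg, if_neg hk]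

end Cycle

open Fin.NatCast in
theorem stmt_8_general (n : ℕ) [NeZero n] (hev : Even n)
    (d : Fin n → Fin n → ℝ)
    (hsymm : ∀ u v, d u v = d v u) :
    ∑ i : Fin n, ∑ j ∈ Finset.univ.erase i,
      (if (j - i).val ≤ n / 2
        then ∑ m ∈ Finset.range (j - i).val, d (i + (m : Fin n)) (i + (m : Fin n) + 1)
        else ∑ m ∈ Finset.range (i - j).val, d (i - (m : Fin n)) (i - (m : Fin n) - 1))
    = (n : ℝ) ^ 2 * (∑ i : Fin n, d i (i + 1)) / 4 := by
  obtain ⟨p, rfl⟩ := hev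
  have hdist : ∑ k ∈ univ.erase (0 : Fin (p + p)),
      (if k.val ≤ (p + p) / 2 then k.val else p + p - k.val) = p * p := by
    rw [sum_erase _ (by simp), show (p + p) / 2 = p by omega,
      Fin.sum_univ_eq_sum_range (fun k => if k ≤ p then k else p + p - k),
      Nat.sum_range_add_self_ite_le]
  rw [sum_congr rfl fun i _ => sum_univ_erase_eq_sum_add_left _ i]
  simp only [add_sub_cancel_left, sub_add_cancel_left]
  rw [sum_comm, sum_congr rfl fun k hk => sum_cycle_arc_of_offset hsymm (ne_of_mem_erase hk),
    ← sum_smul, hdist, nsmul_eq_mul]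
  push_cast
  ring

open Fin.NatCast in
theorem stmt_8 (n : ℕ) [NeZero n] (hn : 4 ≤ n) (hev : Even n)
    (d : Fin n → Fin n → ℝ)
    (hsymm : ∀ u v, d u v = d v u)
    (hnonneg : ∀ u v, 0 ≤ d u v) :
    ∑ i : Fin n, ∑ j ∈ Finset.univ.erase i,
      (if (j - i).val ≤ n / 2
        then ∑ m ∈ Finset.range (j - i).val, d (i + (m : Fin n)) (i + (m : Fin n) + 1)
        else ∑ m ∈ Finset.range (i - j).val, d (i - (m : Fin n)) (i - (m : Fin n) - 1))
    = (n : ℝ) ^ 2 * (∑ i : Fin n, d i (i + 1)) / 4 :=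
  stmt_8_general n hev d hsymm
end

section
/- Let d be a symmetric weight function on V = {v_0,…,v_{n-2}, v*} (n even, n ≥ 4) with triangle inequality, let τ' be the length of the cycle (v_0,…,v_{n-2}), and let τ be the length of a shortest Hamiltonian cycle on V. Then Σ_{t=0}^{n/2-1} (d(v_t,v*) + d(v*,v_{t+1}) − d(v_t,v_{t+1})) + Σ_{t=n/2}^{n-2} (d(v_{t-1},v*) + d(v*,v_t) − d(v_{t-1},v_t)) ≤ 2·Σ_{v ≠ v*} d(v,v*) − τ' + (3/2)τ. -/
/-!
Let `c t` be the cost of inserting `v*` between `v_t` and `v_{t+1}`. Summed once around the cycle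
`(v_0, …, v_{n-2})` these costs give `2 Σ_{v ≠ v*} d(v, v*) - τ'`, and the left-hand side is that
full sum plus `c (n/2 - 1)` minus `c (n - 2)`. The first is at most `τ`, since each of its two
edges through `v*` is at most `τ / 2` (two vertices of a Hamiltonian cycle split it into two paths,
each at least as long as their distance), and the second is nonnegative by the triangle inequality.
-/

open Finset

section

variable {V : Type*} {d : V → V → ℝ}

lemma dist_le_sum_Ico (htri : ∀ u v w, d u w ≤ d u v + d v w) (f : ℕ → V) {i j : ℕ}
    (hij : i < j) : d (f i) (f j) ≤ ∑ k ∈ Ico i j, d (f k) (f (k + 1)) := by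
  induction j, hij using Nat.le_induction with
  | base => simp
  | succ j hij ih =>
    rw [sum_Ico_succ_top (by omega)]
    linarith [htri (f i) (f j) (f (j + 1))]

open Fin.NatCast in
lemma sum_cycle_eq_sum_range {n : ℕ} [NeZero n] (c : Fin n → V) (a : Fin n) :
    ∑ i : Fin n, d (c i) (c (i + 1)) = ∑ j ∈ range n, d (c (a + j)) (c (a + (j + 1 : ℕ))) := by
  rw [← Equiv.sum_comp (Equiv.addLeft a), ← Fin.sum_univ_eq_sum_range]
  refine sum_congr rfl fun i _ => ?_
  simp [Fin.cast_val_eq_self, add_assoc]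

open Fin.NatCast in
lemma two_mul_le_sum_cycle (hsymm : ∀ u v, d u v = d v u)
    (htri : ∀ u v w, d u w ≤ d u v + d v w) {n : ℕ} [NeZero n] (c : Fin n ≃ V) {x y : V}
    (hxy : x ≠ y) : 2 * d x y ≤ ∑ i : Fin n, d (c i) (c (i + 1)) := by
  set a := c.symm x
  set m := (c.symm y - a).val
  set F : ℕ → V := fun j => c (a + j)
  have hm0 : 0 < m := by
    refine Nat.pos_of_ne_zero fun h => hxy ?_
    have : c.symm y = a := sub_eq_zero.mp (Fin.ext h)
    simpa [a] using congrArg c this.symm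
  have hmn : m < n := (c.symm y - a).is_lt
  have hF0 : F 0 = x := by simp [F, a]
  have hFm : F m = y := by simp [F, m, Fin.cast_val_eq_self]
  have hFn : F n = x := by simp [F, a]
  have hsum : ∑ i : Fin n, d (c i) (c (i + 1)) = ∑ j ∈ range n, d (F j) (F (j + 1)) :=
    sum_cycle_eq_sum_range c a
  rw [hsum, ← sum_range_add_sum_Ico _ hmn.le, range_eq_Ico]
  have hforth := dist_le_sum_Ico htri F hm0
  have hback := dist_le_sum_Ico htri F hmn
  rw [hF0, hFm] at hforth
  rw [hFm, hFn, hsymm] at hback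
  linarith

lemma sum_erase_eq_sum_range [Fintype V] [DecidableEq V] {N : ℕ} (hcard : Fintype.card V = N + 1)
    (f : V → ℝ) (v : ℕ → V) (w : V) (hinj : Set.InjOn v (Set.Iio N))
    (hvw : ∀ i < N, v i ≠ w) : ∑ x ∈ univ.erase w, f x = ∑ i ∈ range N, f (v i) := by
  have hsub : (range N).image v ⊆ univ.erase w := by
    simp only [subset_iff, mem_image, mem_range, mem_erase, mem_univ, and_true]
    rintro _ ⟨i, hi, rfl⟩
    exact hvw i hi
  have hinj' : Set.InjOn v (range N) := by rwa [coe_range]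
  have himage : (range N).image v = univ.erase w := by
    refine eq_of_subset_of_card_le hsub ?_
    rw [card_erase_of_mem (mem_univ w), card_univ, hcard, card_image_of_injOn hinj', card_range]
    rfl
  rw [← himage, sum_image hinj']

def insertionCost (d : V → V → ℝ) (v : ℕ → V) (w : V) (t : ℕ) : ℝ :=
  d (v t) w + d w (v (t + 1)) - d (v t) (v (t + 1))

lemma insertionCost_nonneg (htri : ∀ u v w, d u w ≤ d u v + d v w) (v : ℕ → V) (w : V) (t : ℕ) :
    0 ≤ insertionCost d v w t := by
  unfold insertionCost
  linarith [htri (v t) w (v (t + 1))]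

lemma sum_range_insertionCost (hsymm : ∀ u v, d u v = d v u) (v : ℕ → V) (w : V) {N : ℕ}
    (hv : v N = v 0) :
    ∑ t ∈ range N, insertionCost d v w t
      = 2 * ∑ t ∈ range N, d (v t) w - ∑ t ∈ range N, d (v t) (v (t + 1)) := by
  have hshift : ∑ t ∈ range N, d w (v (t + 1)) = ∑ t ∈ range N, d (v t) w := by
    have h := sum_range_succ' (fun t => d (v t) w) N
    rw [sum_range_succ, hv] at h
    simp only [hsymm w]
    linarith
  simp only [insertionCost, sum_sub_distrib, sum_add_distrib, hshift]
  ring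

lemma sum_range_add_sum_Ico_pred (h : ℕ → ℝ) {k N : ℕ} (hk : 1 ≤ k) (hkN : k ≤ N) :
    ∑ t ∈ range k, h t + ∑ t ∈ Ico k N, h (t - 1)
      = ∑ t ∈ range N, h t + h (k - 1) - h (N - 1) := by
  obtain ⟨j, rfl⟩ := Nat.exists_eq_add_of_le' hk
  obtain ⟨M, rfl⟩ := Nat.exists_eq_add_of_le' (hk.trans hkN)
  have hshift : ∑ t ∈ Ico (j + 1) (M + 1), h (t - 1) = ∑ t ∈ Ico j M, h t := by
    rw [← sum_Ico_add']
    simp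
  rw [hshift, sum_range_succ, sum_range_succ, ← sum_range_add_sum_Ico _ (by omega : j ≤ M)]
  simp only [Nat.add_sub_cancel]
  ring

end

theorem stmt_11_general {V : Type*} [Fintype V] [DecidableEq V] (n : ℕ) [NeZero n]
    (hn : 4 ≤ n) (hcard : Fintype.card V = n)
    (d : V → V → ℝ)
    (hsymm : ∀ u v, d u v = d v u)
    (hnonneg : ∀ u v, 0 ≤ d u v)
    (htri : ∀ u v w, d u w ≤ d u v + d v w)
    (v : ℕ → V) (vstar : V)
    (hper : ∀ i, v (i + (n - 1)) = v i)
    (hinj : Set.InjOn v (Set.Iio (n - 1)))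
    (hvs : ∀ i < n - 1, v i ≠ vstar)
    (τ τ' : ℝ)
    (hτ : IsLeast {L : ℝ | ∃ c : Fin n ≃ V, L = ∑ i : Fin n, d (c i) (c (i + 1))} τ)
    (hτ' : τ' = ∑ i ∈ Finset.range (n - 1), d (v i) (v (i + 1))) :
    (∑ t ∈ Finset.range (n / 2), (d (v t) vstar + d vstar (v (t + 1)) - d (v t) (v (t + 1))))
      + (∑ t ∈ Finset.Ico (n / 2) (n - 1),
          (d (v (t - 1)) vstar + d vstar (v t) - d (v (t - 1)) (v t)))
    ≤ 2 * (∑ x ∈ Finset.univ.erase vstar, d x vstar) - τ' + (3 / 2) * τ := by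
  obtain ⟨⟨c, hc⟩, -⟩ := hτ
  have hedge : ∀ x y, x ≠ y → d x y ≤ τ / 2 := fun x y hxy => by
    linarith [two_mul_le_sum_cycle hsymm htri c hxy]
  have hτ0 : 0 ≤ τ := hc ▸ sum_nonneg fun i _ => hnonneg _ _
  have hsecond : ∑ t ∈ Ico (n / 2) (n - 1),
      (d (v (t - 1)) vstar + d vstar (v t) - d (v (t - 1)) (v t))
        = ∑ t ∈ Ico (n / 2) (n - 1), insertionCost d v vstar (t - 1) := by
    refine sum_congr rfl fun t ht => ?_
    rw [insertionCost, Nat.sub_add_cancel (by have := (mem_Ico.mp ht).1; omega)]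
  have hv : v (n - 1) = v 0 := by simpa using hper 0
  have hmid : insertionCost d v vstar (n / 2 - 1) ≤ τ := by
    have h1 := hedge _ _ (hvs (n / 2 - 1) (by omega))
    have h2 := hedge _ _ (hvs (n / 2 - 1 + 1) (by omega)).symm
    unfold insertionCost
    linarith [hnonneg (v (n / 2 - 1)) (v (n / 2 - 1 + 1))]
  calc _ = ∑ t ∈ range (n / 2), insertionCost d v vstar t
        + ∑ t ∈ Ico (n / 2) (n - 1), insertionCost d v vstar (t - 1) := by rw [hsecond]; rfl
    _ = ∑ t ∈ range (n - 1), insertionCost d v vstar t + insertionCost d v vstar (n / 2 - 1)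
        - insertionCost d v vstar (n - 1 - 1) :=
      sum_range_add_sum_Ico_pred _ (by omega) (by omega)
    _ ≤ ∑ t ∈ range (n - 1), insertionCost d v vstar t + τ := by
      linarith [insertionCost_nonneg htri v vstar (n - 1 - 1)]
    _ = 2 * ∑ x ∈ univ.erase vstar, d x vstar - τ' + τ := by
      rw [sum_range_insertionCost hsymm v vstar hv, hτ',
        sum_erase_eq_sum_range (by omega) _ v vstar hinj hvs]
    _ ≤ _ := by linarith

theorem stmt_11 {V : Type*} [Fintype V] [DecidableEq V] (n : ℕ) [NeZero n]
    (hn : 4 ≤ n) (hev : Even n) (hcard : Fintype.card V = n)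
    (d : V → V → ℝ)
    (hdiag : ∀ v, d v v = 0)
    (hsymm : ∀ u v, d u v = d v u)
    (hnonneg : ∀ u v, 0 ≤ d u v)
    (htri : ∀ u v w, d u w ≤ d u v + d v w)
    (v : ℕ → V) (vstar : V)
    (hper : ∀ i, v (i + (n - 1)) = v i)
    (hinj : Set.InjOn v (Set.Iio (n - 1)))
    (hvs : ∀ i < n - 1, v i ≠ vstar)
    (τ τ' : ℝ)
    (hτ : IsLeast {L : ℝ | ∃ c : Fin n ≃ V, L = ∑ i : Fin n, d (c i) (c (i + 1))} τ)
    (hτ' : τ' = ∑ i ∈ Finset.range (n - 1), d (v i) (v (i + 1))) :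
    (∑ t ∈ Finset.range (n / 2), (d (v t) vstar + d vstar (v (t + 1)) - d (v t) (v (t + 1))))
      + (∑ t ∈ Finset.Ico (n / 2) (n - 1),
          (d (v (t - 1)) vstar + d vstar (v t) - d (v (t - 1)) (v t)))
    ≤ 2 * (∑ x ∈ Finset.univ.erase vstar, d x vstar) - τ' + (3 / 2) * τ :=
  stmt_11_general n hn hcard d hsymm hnonneg htri v vstar hper hinj hvs τ τ' hτ hτ'
end

section
/- For even n ≥ 4, in the mirrored double round-robin schedule K*_DRR with the specified home/away assignment, under Assumption A, the tour of every team t ∈ {0,…,n/2−1} visits the venues in the cyclic order (v_t, v*, v_{t+1}, v_{t+2}, …, v_{t-1}), hence its traveling distance equals τ' + d(v_t,v*) + d(v*,v_{t+1}) − d(v_t,v_{t+1}), where τ' is the length of the cycle (v_0,…,v_{n-2}). -/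
/-- Venue at which team `t` plays in slot `s ∈ {0,…,2n-3}` of `K*_DRR`:
its own venue for a home game, the opponent's venue for an away game. -/
def loc {V : Type*} (n : ℕ) (venue : ℕ → V) (t s : ℕ) : V :=
  if Home n t s = true then venue t else venue (Kstar n t (s % (n - 1)))

/-! Read from slot `t`, the tour of team `t` visits `v_0, v_1, …, v_t`, stays at home for `n - 1`
slots, goes to `v*`, then visits `v_{t+1}, …, v_{n-2}` and returns to `v_0`. Staying costs nothing
since `d v v = 0`, so the tour is the cycle `(v_0, …, v_{n-2})` with its edge `v_t v_{t+1}` replaced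
by the detour `v_t v* v_{t+1}`. -/

open Finset

theorem Finset.sum_range_add_mod {M : Type*} [AddCommMonoid M] (g : ℕ → M) (m t : ℕ) :
    ∑ j ∈ range m, g ((t + j) % m) = ∑ j ∈ range m, g j := by
  induction t with
  | zero => exact sum_congr rfl fun j hj => by rw [zero_add, Nat.mod_eq_of_lt (mem_range.1 hj)]
  | succ t ih =>
    rw [← ih]
    rcases m with _ | k
    · simp
    rw [sum_range_succ, sum_range_succ']
    congr 1
    · exact sum_congr rfl fun j _ => by rw [add_right_comm, add_assoc]
    · rw [add_right_comm, add_assoc, Nat.add_mod_right, add_zero]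

theorem Finset.sum_range_succ_mod {α M : Type*} [AddCommMonoid M] (f : α → α → M)
    (x : ℕ → α) (m : ℕ) :
    ∑ j ∈ range (m + 1), f (x j) (x ((j + 1) % (m + 1)))
      = ∑ j ∈ range m, f (x j) (x (j + 1)) + f (x m) (x 0) := by
  rw [sum_range_succ, Nat.mod_self]
  congr 1
  exact sum_congr rfl fun j hj => by rw [Nat.mod_eq_of_lt (by simpa using hj)]

theorem Nat.mod_eq_or_mod_add_eq_of_lt_add {a b : ℕ} (h : a < b + b) :
    a % b = a ∨ a % b + b = a := by
  rcases lt_or_ge a b with hab | hab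
  · exact .inl (Nat.mod_eq_of_lt hab)
  · exact .inr (by rw [Nat.mod_eq_sub_mod hab, Nat.mod_eq_of_lt (by omega)]; omega)

theorem Kstar_add_mod {n t : ℕ} (ht : t < n - 1) (j : ℕ) :
    Kstar n t ((t + j) % (n - 1)) = if j % (n - 1) = t then n - 1 else j % (n - 1) := by
  have hr : ((((t + j) % (n - 1) : ℕ) : ℤ) - t) % ((n : ℤ) - 1) = ((j % (n - 1) : ℕ) : ℤ) := by
    have hn : ((n - 1 : ℕ) : ℤ) = (n : ℤ) - 1 := by omega
    push_cast
    rw [hn, Int.sub_emod, Int.emod_emod, ← Int.sub_emod, add_sub_cancel_left]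
  simp only [Kstar, if_neg ht.ne, hr, Int.toNat_natCast]

/-- Index of the venue of team `t` in slot `t + j`; index `n - 1` is the venue `v*`. -/
def tourStop (n t j : ℕ) : ℕ :=
  if j ≤ t then j
  else if j ≤ n + t - 2 then t
  else if j = n + t - 1 then n - 1
  else j + 1 - n

section tourStop

variable {n t j : ℕ}

theorem tourStop_of_le (h : j ≤ t) : tourStop n t j = j := if_pos h

theorem tourStop_of_le_of_le (h₁ : t ≤ j) (h₂ : j ≤ n + t - 2) : tourStop n t j = t := by
  unfold tourStop; split_ifs <;> omega

theorem tourStop_of_add_one_eq (hn : 2 ≤ n) (h : j + 1 = n + t) : tourStop n t j = n - 1 := by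
  unfold tourStop; split_ifs <;> omega

theorem tourStop_of_add_le (hn : 0 < n) (h : n + t ≤ j) : tourStop n t j = j + 1 - n := by
  unfold tourStop; split_ifs <;> omega

end tourStop

theorem loc_add_mod_of_lt {V : Type*} {n t j : ℕ} (venue : ℕ → V) (ht : 2 * t + 2 ≤ n)
    (hj : j < 2 * n - 2) :
    loc n venue t ((t + j) % (2 * n - 2)) = venue (tourStop n t j) := by
  have hHome : ∀ s, Home n t s = decide (2 * t ≤ s ∧ s ≤ n + 2 * t - 2) :=
    fun s => if_pos (by omega)
  have hdvd : n - 1 ∣ 2 * n - 2 := ⟨2, by omega⟩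
  rw [loc, hHome, Nat.mod_mod_of_dvd _ hdvd, Kstar_add_mod (by omega)]
  have hs := Nat.mod_eq_or_mod_add_eq_of_lt_add (show t + j < (2 * n - 2) + (2 * n - 2) by omega)
  have hr := Nat.mod_eq_or_mod_add_eq_of_lt_add (show j < (n - 1) + (n - 1) by omega)
  have hr' := Nat.mod_lt j (show 0 < n - 1 by omega)
  generalize (t + j) % (2 * n - 2) = s at hs ⊢
  generalize j % (n - 1) = r at hr hr' ⊢
  simp only [tourStop, decide_eq_true_eq, ← apply_ite venue]
  congr 1
  split_ifs <;> omega

theorem loc_add_mod {V : Type*} {n t : ℕ} (venue : ℕ → V) (ht : 2 * t + 2 ≤ n) (j : ℕ) :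
    loc n venue t ((t + j) % (2 * n - 2)) = venue (tourStop n t (j % (2 * n - 2))) := by
  rw [← loc_add_mod_of_lt venue ht (Nat.mod_lt _ (by omega)), Nat.add_mod_mod]

theorem sum_range_tourStop {M : Type*} [AddCommMonoid M] {n t : ℕ} (ht : 2 * t + 2 ≤ n)
    (hn : 3 ≤ n) (f : ℕ → ℕ → M) (hf : ∀ i, f i i = 0) :
    ∑ j ∈ range (2 * n - 3), f (tourStop n t j) (tourStop n t (j + 1)) + f t (t + 1)
      = ∑ i ∈ range (n - 2), f i (i + 1) + f t (n - 1) + f (n - 1) (t + 1) := by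
  rw [show n - 2 = t + (1 + (n - 3 - t)) by omega,
    show 2 * n - 3 = t + (n - 2 + (1 + (1 + (n - 3 - t)))) by omega]
  simp only [sum_range_add, sum_range_one, add_zero]
  have h_out : ∑ j ∈ range t, f (tourStop n t j) (tourStop n t (j + 1))
      = ∑ i ∈ range t, f i (i + 1) :=
    sum_congr rfl fun j hj => by
      rw [tourStop_of_le (mem_range.1 hj).le, tourStop_of_le (mem_range.1 hj)]
  have h_home : ∑ j ∈ range (n - 2), f (tourStop n t (t + j)) (tourStop n t (t + j + 1)) = 0 :=
    sum_eq_zero fun j hj => by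
      have := mem_range.1 hj
      rw [tourStop_of_le_of_le (by omega) (by omega),
        tourStop_of_le_of_le (by omega) (by omega), hf]
  have h_back : ∑ j ∈ range (n - 3 - t),
      f (tourStop n t (t + (n - 2 + (1 + (1 + j)))))
        (tourStop n t (t + (n - 2 + (1 + (1 + j))) + 1))
      = ∑ i ∈ range (n - 3 - t), f (t + (1 + i)) (t + (1 + i) + 1) :=
    sum_congr rfl fun j _ => by
      rw [tourStop_of_add_le (by omega) (by omega), tourStop_of_add_le (by omega) (by omega)]
      congr 1 <;> omega
  rw [h_out, h_home, h_back, tourStop_of_le_of_le (by omega) (by omega),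
    tourStop_of_add_one_eq (by omega) (by omega), tourStop_of_add_one_eq (by omega) (by omega),
    tourStop_of_add_le (by omega) (by omega), show t + (n - 2 + 1) + 1 + 1 - n = t + 1 by omega]
  abel

theorem stmt_12_general {V : Type*} (n : ℕ) (hn : 4 ≤ n)
    (d : V → V → ℝ)
    (hdiag : ∀ v, d v v = 0)
    (venue : ℕ → V)
    (t : ℕ) (ht : t < n / 2) :
    ∑ s ∈ Finset.range (2 * n - 2),
        d (loc n venue t s) (loc n venue t ((s + 1) % (2 * n - 2)))
    = (∑ i ∈ Finset.range (n - 1), d (venue i) (venue ((i + 1) % (n - 1))))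
      + d (venue t) (venue (n - 1)) + d (venue (n - 1)) (venue (t + 1))
      - d (venue t) (venue (t + 1)) := by
  have htn : 2 * t + 2 ≤ n := by omega
  have h_tour :
      ∑ s ∈ range (2 * n - 2), d (loc n venue t s) (loc n venue t ((s + 1) % (2 * n - 2)))
      = ∑ j ∈ range (2 * n - 3), d (venue (tourStop n t j)) (venue (tourStop n t (j + 1)))
        + d (venue (n - 2)) (venue 0) := by
    have h := sum_range_succ_mod (fun i k => d (venue i) (venue k)) (tourStop n t) (2 * n - 3)
    rw [show 2 * n - 3 + 1 = 2 * n - 2 by omega, tourStop_of_le (Nat.zero_le t),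
      tourStop_of_add_le (by omega) (by omega), show 2 * n - 3 + 1 - n = n - 2 by omega] at h
    rw [← h, ← sum_range_add_mod _ _ t]
    refine sum_congr rfl fun j hj => ?_
    rw [Nat.mod_add_mod, add_assoc, loc_add_mod venue htn, loc_add_mod venue htn,
      Nat.mod_eq_of_lt (mem_range.1 hj)]
  have h_cycle : ∑ i ∈ range (n - 1), d (venue i) (venue ((i + 1) % (n - 1)))
      = ∑ i ∈ range (n - 2), d (venue i) (venue (i + 1)) + d (venue (n - 2)) (venue 0) := by
    have h := sum_range_succ_mod (fun i k => d (venue i) (venue k)) (fun i => i) (n - 2)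
    rwa [show n - 2 + 1 = n - 1 by omega] at h
  have h_path := sum_range_tourStop htn (by omega) (fun i k => d (venue i) (venue k))
    (fun i => hdiag (venue i))
  rw [h_tour, h_cycle]
  linarith

theorem stmt_12 {V : Type*} [Fintype V] (n : ℕ) (hn : 4 ≤ n) (hev : Even n)
    (hcard : Fintype.card V = n)
    (d : V → V → ℝ)
    (hdiag : ∀ v, d v v = 0)
    (hsymm : ∀ u v, d u v = d v u)
    (hnonneg : ∀ u v, 0 ≤ d u v)
    (htri : ∀ u v w, d u w ≤ d u v + d v w)
    (venue : ℕ → V) (hbij : Set.BijOn venue (Set.Iio n) Set.univ)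
    (t : ℕ) (ht : t < n / 2) :
    ∑ s ∈ Finset.range (2 * n - 2),
        d (loc n venue t s) (loc n venue t ((s + 1) % (2 * n - 2)))
    = (∑ i ∈ Finset.range (n - 1), d (venue i) (venue ((i + 1) % (n - 1))))
      + d (venue t) (venue (n - 1)) + d (venue (n - 1)) (venue (t + 1))
      - d (venue t) (venue (t + 1)) :=
  stmt_12_general n hn d hdiag venue t ht
end

section
/- For even n ≥ 4, the mirrored double round-robin schedule K*_DRR satisfies the no-repeater constraint: no team plays the same opponent in two consecutive slots. -/
theorem Nat.mod_ne_add_one_mod {m : ℕ} (hm : 2 ≤ m) (s : ℕ) : s % m ≠ (s + 1) % m := by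
  intro h
  have h1 : 0 ≡ 1 [MOD m] := Nat.ModEq.add_left_cancel' s h
  simp [Nat.ModEq, Nat.mod_eq_of_lt (show 1 < m by omega)] at h1

theorem Int.injOn_toNat_natCast_sub_emod (t m : ℕ) :
    Set.InjOn (fun s : ℕ => (((s : ℤ) - t) % m).toNat) (Set.Iio m) := by
  intro a ha b hb hab
  have hm : (0 : ℤ) < m := by have : a < m := ha; omega
  have hmod : (a : ℤ) - t ≡ b - t [ZMOD m] := by
    have := Int.emod_nonneg ((a : ℤ) - t) hm.ne'
    have := Int.emod_nonneg ((b : ℤ) - t) hm.ne'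
    simp only at hab
    unfold Int.ModEq
    omega
  exact Nat.ModEq.eq_of_lt_of_lt (Int.natCast_modEq_iff.mp (by simpa using hmod.add_right (t : ℤ))) ha hb

theorem Kstar_injOn (n t : ℕ) : Set.InjOn (Kstar n t) (Set.Iio (n - 1)) := by
  intro a ha b hb hab
  simp only [Set.mem_Iio] at ha hb
  by_cases ht : t = n - 1
  · simp only [Kstar, if_pos ht] at hab
    split_ifs at hab <;> omega
  · have hcast : (n : ℤ) - 1 = ((n - 1 : ℕ) : ℤ) := by omega
    have hlt (s : ℕ) : (((s : ℤ) - t) % ((n - 1 : ℕ) : ℤ)).toNat < n - 1 := by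
      have := Int.emod_lt_of_pos ((s : ℤ) - t) (show (0 : ℤ) < ((n - 1 : ℕ) : ℤ) by omega)
      omega
    have hinj := Int.injOn_toNat_natCast_sub_emod t (n - 1)
    have := hlt a
    have := hlt b
    simp only [Kstar, if_neg ht, hcast] at hab
    split_ifs at hab with ha_t hb_t hb_t
    · exact hinj ha hb (ha_t.trans hb_t.symm)
    · omega
    · omega
    · exact hinj ha hb hab

theorem stmt_17_general (n : ℕ) (hn : 4 ≤ n) :
    ∀ t < n, ∀ s ≤ 2 * n - 4,
      Kstar n t (s % (n - 1)) ≠ Kstar n t ((s + 1) % (n - 1)) := by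
  intro t _ s _
  have hm : 0 < n - 1 := by omega
  exact (Kstar_injOn n t).ne (Nat.mod_lt s hm) (Nat.mod_lt (s + 1) hm)
    (Nat.mod_ne_add_one_mod (by omega) s)

theorem stmt_17 (n : ℕ) (hn : 4 ≤ n) (hev : Even n) :
    ∀ t < n, ∀ s ≤ 2 * n - 4,
      Kstar n t (s % (n - 1)) ≠ Kstar n t ((s + 1) % (n - 1)) :=
  stmt_17_general n hn
end

section
/- For a double round-robin tournament on n teams (n even, n ≥ 4) whose venue distances are symmetric, nonnegative, and satisfy the triangle inequality, the total traveling distance of any feasible schedule is at least nτ, where τ is the length of a shortest Hamiltonian cycle on the n home venues. -/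
/-!
Number the venues in the order in which a team first reaches them. Consecutive venues of this
Hamiltonian cycle are joined by disjoint stretches of the team's closed route, the last one
running from the last new venue back home, so by the triangle inequality the cycle is no longer
than the route. Hence every team travels at least `τ`.
-/

open Finset

open Classical in
theorem exists_strictMono_bijective_of_forall_exists_le {V : Type*} [Fintype V] {n : ℕ}
    [NeZero n] (hcard : Fintype.card V = n) (r : ℕ → V) {N : ℕ}
    (hvisit : ∀ x, ∃ i ≤ N, r i = x) :
    ∃ p : Fin n → ℕ, StrictMono p ∧ p 0 = 0 ∧ (∀ i, p i ≤ N) ∧ Function.Bijective (r ∘ p) := by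
  -- `p` lists the first-visit times in increasing order
  set firstVisit : V → ℕ := fun x => Nat.find (hvisit x)
  have hfirst_le (x : V) : firstVisit x ≤ N := (Nat.find_spec (hvisit x)).1
  have hr_first (x : V) : r (firstVisit x) = x := (Nat.find_spec (hvisit x)).2
  have hinj : Function.Injective firstVisit := fun x y hxy => by
    rw [← hr_first x, ← hr_first y, hxy]
  set S := univ.image firstVisit
  have hS : S.card = n := by rw [card_image_of_injective _ hinj, card_univ, hcard]
  set p := S.orderEmbOfFin hS
  have hp_first (i : Fin n) : firstVisit (r (p i)) = p i := by
    obtain ⟨x, -, hx⟩ := mem_image.mp (S.orderEmbOfFin_mem hS i)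
    rw [← hx, hr_first]
  refine ⟨p, p.strictMono, ?_, fun i => ?_, ?_⟩
  · have h0 : 0 ∈ S := mem_image.mpr ⟨r 0, mem_univ _, Nat.eq_zero_of_le_zero
      (Nat.find_min' (hvisit (r 0)) ⟨N.zero_le, rfl⟩)⟩
    exact Nat.eq_zero_of_le_zero ((S.orderEmbOfFin_zero hS (NeZero.pos n)).trans_le
      (S.min'_le 0 h0))
  · obtain ⟨x, -, hx⟩ := mem_image.mp (S.orderEmbOfFin_mem hS i)
    exact hx ▸ hfirst_le x
  · refine (Fintype.bijective_iff_injective_and_card _).mpr ⟨fun i j hij => ?_, by simp [hcard]⟩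
    exact p.injective (by rw [← hp_first i, ← hp_first j]; exact congrArg firstVisit hij)

section WalkLength

variable {V : Type*} (d : V → V → ℝ) (hdiag : ∀ v, d v v = 0)
  (htri : ∀ u v w, d u w ≤ d u v + d v w)
include hdiag htri

theorem le_sum_Ico_of_triangle (r : ℕ → V) {a b : ℕ} (hab : a ≤ b) :
    d (r a) (r b) ≤ ∑ j ∈ Ico a b, d (r j) (r (j + 1)) := by
  induction b, hab using Nat.le_induction with
  | base => simp [hdiag]
  | succ b hab ih =>
    rw [sum_Ico_succ_top hab]
    linarith [htri (r a) (r b) (r (b + 1))]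

theorem sum_comp_le_sum_Ico_of_monotone (r : ℕ → V) {G : ℕ → ℕ} (hG : Monotone G) (N : ℕ) :
    ∑ k ∈ range N, d (r (G k)) (r (G (k + 1))) ≤ ∑ j ∈ Ico (G 0) (G N), d (r j) (r (j + 1)) := by
  induction N with
  | zero => simp
  | succ N ih =>
    rw [sum_range_succ, ← sum_Ico_consecutive _ (hG N.zero_le) (hG N.le_succ)]
    exact add_le_add ih (le_sum_Ico_of_triangle d hdiag htri r (hG N.le_succ))

theorem sum_cycle_le_sum_walk {n : ℕ} [NeZero n] (r : ℕ → V) {N : ℕ} (hclosed : r N = r 0)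
    {p : Fin n → ℕ} (hp : Monotone p) (hp0 : p 0 = 0) (hpN : ∀ i, p i ≤ N) :
    ∑ i : Fin n, d (r (p i)) (r (p (i + 1))) ≤ ∑ j ∈ range N, d (r j) (r (j + 1)) := by
  -- `G` extends `p` by `G n = N`: the closing edge of the cycle is covered by the end of the walk
  set G : ℕ → ℕ := fun k => if h : k < n then p ⟨k, h⟩ else N with hG
  have hGp (i : Fin n) : G i = p i := dif_pos i.isLt
  have hGN : G n = N := dif_neg (lt_irrefl n)
  have hGmono : Monotone G := by
    intro a b hab
    simp only [hG]
    split_ifs <;> first | exact hp hab | exact hpN _ | exact le_rfl | omega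
  have hterm (i : Fin n) : r (p (i + 1)) = r (G (i + 1)) := by
    rcases lt_or_eq_of_le (Nat.succ_le_of_lt i.isLt) with h | h
    · rw [← Fin.val_add_one_of_lt' h, hGp]
    · have hwrap : i + 1 = 0 := by ext; simp [Fin.val_add, ← Nat.succ_eq_add_one, h]
      rw [hwrap, hp0, ← Nat.succ_eq_add_one, h, hGN, hclosed]
  calc ∑ i : Fin n, d (r (p i)) (r (p (i + 1)))
      = ∑ k ∈ range n, d (r (G k)) (r (G (k + 1))) := by
        rw [← Fin.sum_univ_eq_sum_range (fun k => d (r (G k)) (r (G (k + 1))))]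
        exact sum_congr rfl fun i _ => by rw [hGp, hterm]
    _ ≤ ∑ j ∈ Ico (G 0) (G n), d (r j) (r (j + 1)) :=
        sum_comp_le_sum_Ico_of_monotone d hdiag htri r hGmono n
    _ = ∑ j ∈ range N, d (r j) (r (j + 1)) := by
        rw [hGN, show G 0 = 0 from (hGp 0).trans hp0, range_eq_Ico]

theorem exists_cycle_le_sum_walk [Fintype V] {n : ℕ} [NeZero n] (hcard : Fintype.card V = n)
    (r : ℕ → V) {N : ℕ} (hclosed : r N = r 0) (hvisit : ∀ x, ∃ i ≤ N, r i = x) :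
    ∃ c : Fin n ≃ V, ∑ i : Fin n, d (c i) (c (i + 1)) ≤ ∑ j ∈ range N, d (r j) (r (j + 1)) := by
  obtain ⟨p, hp, hp0, hpN, hbij⟩ := exists_strictMono_bijective_of_forall_exists_le hcard r hvisit
  exact ⟨Equiv.ofBijective _ hbij, sum_cycle_le_sum_walk d hdiag htri r hclosed hp.monotone hp0 hpN⟩

end WalkLength

theorem stmt_18_general {V : Type*} [Fintype V] (n : ℕ) [NeZero n]
    (hcard : Fintype.card V = n) (d : V → V → ℝ)
    (hdiag : ∀ v, d v v = 0)
    (htri : ∀ u v w, d u w ≤ d u v + d v w)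
    (τ : ℝ)
    (hτ : IsLeast {L : ℝ | ∃ c : Fin n ≃ V, L = ∑ i : Fin n, d (c i) (c (i + 1))} τ)
    (home : Fin n ≃ V)
    (route : Fin n → ℕ → V) (len : Fin n → ℕ)
    (hstart : ∀ t, route t 0 = home t)
    (hend : ∀ t, route t (len t) = home t)
    (hvisit : ∀ t, ∀ x : V, ∃ i ≤ len t, route t i = x) :
    (n : ℝ) * τ ≤ ∑ t : Fin n, ∑ i ∈ Finset.range (len t), d (route t i) (route t (i + 1)) := by
  have hτ_le_route (t : Fin n) :
      τ ≤ ∑ i ∈ range (len t), d (route t i) (route t (i + 1)) := by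
    obtain ⟨c, hc⟩ := exists_cycle_le_sum_walk d hdiag htri hcard (route t)
      ((hend t).trans (hstart t).symm) (hvisit t)
    exact (hτ.2 ⟨c, rfl⟩).trans hc
  calc (n : ℝ) * τ = ∑ _t : Fin n, τ := by simp
    _ ≤ _ := sum_le_sum fun t _ => hτ_le_route t

theorem stmt_18 {V : Type*} [Fintype V] (n : ℕ) [NeZero n] (hn : 4 ≤ n) (hev : Even n)
    (hcard : Fintype.card V = n) (d : V → V → ℝ)
    (hdiag : ∀ v, d v v = 0)
    (hsymm : ∀ u v, d u v = d v u)
    (hnonneg : ∀ u v, 0 ≤ d u v)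
    (htri : ∀ u v w, d u w ≤ d u v + d v w)
    (τ : ℝ)
    (hτ : IsLeast {L : ℝ | ∃ c : Fin n ≃ V, L = ∑ i : Fin n, d (c i) (c (i + 1))} τ)
    (home : Fin n ≃ V)
    (route : Fin n → ℕ → V) (len : Fin n → ℕ)
    (hstart : ∀ t, route t 0 = home t)
    (hend : ∀ t, route t (len t) = home t)
    (hvisit : ∀ t, ∀ x : V, ∃ i ≤ len t, route t i = x) :
    (n : ℝ) * τ ≤ ∑ t : Fin n, ∑ i ∈ Finset.range (len t), d (route t i) (route t (i + 1)) :=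
  stmt_18_general n hcard d hdiag htri τ hτ home route len hstart hend hvisit
end
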